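/- In the real quaternions ℍ, let φ = (1 + √5)/2 be the golden ratio, ζ = (φ + φ⁻¹·i + j)/2, and let 𝒪_𝔦 = ℤ[φ]·1 + ℤ[φ]·i + ℤ[φ]·ζ + ℤ[φ]·(iζ) (the binary icosahedral order). Then Hur(ℤ[φ]) ⊆ 𝒪_𝔦: every quaternion whose coordinates are all in ℤ[φ] or all in ℤ[φ] + 1/2 lies in 𝒪_𝔦 (indeed j = 2ζ − φ − φ⁻¹·i, k = 2iζ + φ⁻¹ − φ·i, and (1+i+j+k)/2 = (1−φ)·i + ζ + iζ), and the containment is strict since ζ ∉ Hur(ℤ[φ]). -/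

import Mathlib

open Quaternion

/-- The golden ratio `φ = (1+√5)/2`. -/
noncomputable def φgold : ℝ := (1 + Real.sqrt 5) / 2

/-- Membership in `ℤ[φ] ⊆ ℝ`. -/
def InZphi (x : ℝ) : Prop :=
  ∃ a b : ℤ, x = a + b * φgold

/-- `Hur(ℤ[φ])`: real quaternions whose four coordinates are all in `ℤ[φ]` or
all in `ℤ[φ] + 1/2`. -/
def IsHurPhi (q : ℍ) : Prop :=
  (InZphi q.re ∧ InZphi q.imI ∧ InZphi q.imJ ∧ InZphi q.imK) ∨
  (InZphi (q.re - 1/2) ∧ InZphi (q.imI - 1/2) ∧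
    InZphi (q.imJ - 1/2) ∧ InZphi (q.imK - 1/2))

/-- The quaternion `i`. -/
def qi : ℍ := ⟨0, 1, 0, 0⟩

/-- The quaternion `j`. -/
def qj : ℍ := ⟨0, 0, 1, 0⟩

/-- `ζ = (φ + φ⁻¹ i + j)/2`. -/
noncomputable def ζq : ℍ := ((φgold : ℍ) + ((φgold⁻¹ : ℝ) : ℍ) * qi + qj) / (2 : ℍ)

/-- Membership in the binary icosahedral order
`𝒪_𝔦 = ℤ[φ]·1 + ℤ[φ]·i + ℤ[φ]·ζ + ℤ[φ]·(iζ)`. -/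
noncomputable def InOrdI (q : ℍ) : Prop :=
  ∃ a b c d : ℝ, InZphi a ∧ InZphi b ∧ InZphi c ∧ InZphi d ∧
    q = (a : ℍ) * 1 + (b : ℍ) * qi + (c : ℍ) * ζq + (d : ℍ) * (qi * ζq)

/-!
In the ℝ-basis `1, i, ζ, iζ` of `ℍ` the coefficients of `q` are `ℤ[φ]`-linear
combinations of its coordinates (`φ⁻¹ = φ - 1`), so every quaternion with coordinates in `ℤ[φ]`
lies in `𝒪_𝔦`; the half-integral ones differ from those by
`(1 + i + j + k)/2 = (1 - φ) i + ζ + iζ ∈ 𝒪_𝔦`. On the other hand `ζ` has a coordinate `1/2` and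
real part `φ/2`, while an element `r + s φ` of `ℤ[φ]` with `r, s ∈ ℚ` has `r ∈ ℤ`, because `φ` is
irrational.
-/

open Real

lemma φgold_eq_goldenRatio : φgold = goldenRatio := rfl

lemma φgold_sq : φgold ^ 2 = φgold + 1 := goldenRatio_sq

lemma inv_φgold : φgold⁻¹ = φgold - 1 := by
  rw [φgold_eq_goldenRatio, inv_goldenRatio, ← one_sub_goldenConj]; ring

def zPhi : Subring ℝ where
  carrier := {x | InZphi x}
  zero_mem' := ⟨0, 0, by simp⟩
  one_mem' := ⟨1, 0, by simp⟩
  add_mem' := by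
    rintro _ _ ⟨a, b, rfl⟩ ⟨c, d, rfl⟩
    exact ⟨a + c, b + d, by push_cast; ring⟩
  neg_mem' := by
    rintro _ ⟨a, b, rfl⟩
    exact ⟨-a, -b, by push_cast; ring⟩
  mul_mem' := by
    rintro _ _ ⟨a, b, rfl⟩ ⟨c, d, rfl⟩
    refine ⟨a * c + b * d, a * d + b * c + b * d, ?_⟩
    push_cast
    linear_combination (b * d : ℝ) * φgold_sq

@[simp] lemma mem_zPhi {x : ℝ} : x ∈ zPhi ↔ InZphi x := Iff.rfl

lemma φgold_mem_zPhi : φgold ∈ zPhi := ⟨0, 1, by simp⟩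

lemma inv_φgold_mem_zPhi : φgold⁻¹ ∈ zPhi := by
  rw [inv_φgold]; exact sub_mem φgold_mem_zPhi (one_mem _)

lemma den_eq_one_of_rat_add_rat_mul_mem_zPhi {r s : ℚ} (h : (r + s * φgold : ℝ) ∈ zPhi) :
    r.den = 1 := by
  obtain ⟨a, b, hab⟩ := h
  rw [φgold_eq_goldenRatio] at hab
  obtain rfl : s = b := by
    by_contra hsb
    refine ((goldenRatio_irrational.ratCast_mul (sub_ne_zero.2 hsb)).ratCast_add
      (r - a)).ne_zero ?_
    push_cast
    linear_combination hab
  obtain rfl : r = a := by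
    push_cast at hab
    exact_mod_cast (by linarith : (r : ℝ) = a)
  rfl

@[simp] lemma qi_re : qi.re = 0 := rfl
@[simp] lemma qi_imI : qi.imI = 1 := rfl
@[simp] lemma qi_imJ : qi.imJ = 0 := rfl
@[simp] lemma qi_imK : qi.imK = 0 := rfl
@[simp] lemma qj_re : qj.re = 0 := rfl
@[simp] lemma qj_imI : qj.imI = 0 := rfl
@[simp] lemma qj_imJ : qj.imJ = 1 := rfl
@[simp] lemma qj_imK : qj.imK = 0 := rfl

lemma ζq_eq_smul : ζq = (2⁻¹ : ℝ) • ((φgold : ℍ) + ((φgold⁻¹ : ℝ) : ℍ) * qi + qj) := by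
  have two_eq_coe : (2 : ℍ) = ((2 : ℝ) : ℍ) := rfl
  rw [ζq, div_eq_mul_inv, two_eq_coe, ← coe_inv, ← coe_commutes, coe_mul_eq_smul]

@[simp] lemma ζq_re : ζq.re = φgold / 2 := by simp [ζq_eq_smul, -coe_inv]; ring
@[simp] lemma ζq_imI : ζq.imI = φgold⁻¹ / 2 := by simp [ζq_eq_smul, -coe_inv]; ring
@[simp] lemma ζq_imJ : ζq.imJ = 1 / 2 := by simp [ζq_eq_smul, -coe_inv]
@[simp] lemma ζq_imK : ζq.imK = 0 := by simp [ζq_eq_smul, -coe_inv]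

noncomputable def ordIComb (a b c d : ℝ) : ℍ :=
  (a : ℍ) * 1 + (b : ℍ) * qi + (c : ℍ) * ζq + (d : ℍ) * (qi * ζq)

lemma ordIComb_eq (a b c d : ℝ) : ordIComb a b c d =
    ⟨a + c * φgold / 2 - d * φgold⁻¹ / 2, b + c * φgold⁻¹ / 2 + d * φgold / 2, c / 2, d / 2⟩ := by
  ext <;> simp [ordIComb, coe_mul_eq_smul, re_mul, imI_mul, imJ_mul, imK_mul] <;> ring

lemma eq_ordIComb (q : ℍ) :
    q = ordIComb (q.re - q.imJ * φgold + q.imK * φgold⁻¹)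
      (q.imI - q.imJ * φgold⁻¹ - q.imK * φgold) (2 * q.imJ) (2 * q.imK) := by
  rw [ordIComb_eq]; ext <;> dsimp <;> ring

lemma ordIComb_zero_one_sub_φgold_one_one :
    ordIComb 0 (1 - φgold) 1 1 = ⟨1 / 2, 1 / 2, 1 / 2, 1 / 2⟩ := by
  rw [ordIComb_eq, inv_φgold]; ext <;> dsimp <;> ring

lemma inOrdI_ordIComb {a b c d : ℝ} (ha : a ∈ zPhi) (hb : b ∈ zPhi) (hc : c ∈ zPhi)
    (hd : d ∈ zPhi) : InOrdI (ordIComb a b c d) :=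
  ⟨a, b, c, d, ha, hb, hc, hd, rfl⟩

lemma InOrdI.add {p q : ℍ} (hp : InOrdI p) (hq : InOrdI q) : InOrdI (p + q) := by
  obtain ⟨a, b, c, d, ha, hb, hc, hd, rfl⟩ := hp
  obtain ⟨a', b', c', d', ha', hb', hc', hd', rfl⟩ := hq
  refine ⟨a + a', b + b', c + c', d + d', add_mem (s := zPhi) ha ha', add_mem (s := zPhi) hb hb',
    add_mem (s := zPhi) hc hc', add_mem (s := zPhi) hd hd', ?_⟩
  push_cast
  simp only [add_mul]
  abel

lemma inOrdI_of_mem_zPhi {q : ℍ} (hre : q.re ∈ zPhi) (hI : q.imI ∈ zPhi) (hJ : q.imJ ∈ zPhi)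
    (hK : q.imK ∈ zPhi) : InOrdI q := by
  rw [eq_ordIComb q]
  exact inOrdI_ordIComb
    (add_mem (sub_mem hre (mul_mem hJ φgold_mem_zPhi)) (mul_mem hK inv_φgold_mem_zPhi))
    (sub_mem (sub_mem hI (mul_mem hJ inv_φgold_mem_zPhi)) (mul_mem hK φgold_mem_zPhi))
    (mul_mem (ofNat_mem _ 2) hJ) (mul_mem (ofNat_mem _ 2) hK)

lemma inOrdI_half : InOrdI ⟨1 / 2, 1 / 2, 1 / 2, 1 / 2⟩ := by
  rw [← ordIComb_zero_one_sub_φgold_one_one]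
  exact inOrdI_ordIComb (zero_mem _) (sub_mem (one_mem _) φgold_mem_zPhi) (one_mem _) (one_mem _)

lemma inOrdI_ζq : InOrdI ζq := by
  simpa [ordIComb] using
    inOrdI_ordIComb (zero_mem zPhi) (zero_mem zPhi) (one_mem zPhi) (zero_mem zPhi)

lemma IsHurPhi.inOrdI {q : ℍ} (hq : IsHurPhi q) : InOrdI q := by
  rcases hq with ⟨hre, hI, hJ, hK⟩ | ⟨hre, hI, hJ, hK⟩
  · exact inOrdI_of_mem_zPhi hre hI hJ hK
  · set h : ℍ := ⟨1 / 2, 1 / 2, 1 / 2, 1 / 2⟩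
    rw [← sub_add_cancel q h]
    exact (inOrdI_of_mem_zPhi (q := q - h) hre hI hJ hK).add inOrdI_half

lemma not_isHurPhi_ζq : ¬ IsHurPhi ζq := by
  rintro (⟨-, -, hJ, -⟩ | ⟨hre, -, -, -⟩)
  · have := den_eq_one_of_rat_add_rat_mul_mem_zPhi (r := 1 / 2) (s := 0) (by simpa using hJ)
    norm_num at this
  · have := den_eq_one_of_rat_add_rat_mul_mem_zPhi (r := -1 / 2) (s := 1 / 2)
      (by convert mem_zPhi.2 hre using 2; simp; ring)
    norm_num at this

/-- `Hur(ℤ[φ])` is strictly contained in the binary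
icosahedral order `𝒪_𝔦`: every Hurwitz quaternion over `ℤ[φ]` lies in `𝒪_𝔦`,
while `ζ = (φ + φ⁻¹ i + j)/2 ∈ 𝒪_𝔦` is not a Hurwitz quaternion. -/
theorem hurwitz_ssubset_binary_icosahedral_order :
    (∀ q : ℍ, IsHurPhi q → InOrdI q) ∧ InOrdI ζq ∧ ¬ IsHurPhi ζq :=
  ⟨fun _ hq => hq.inOrdI, inOrdI_ζq, not_isHurPhi_ζq⟩
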